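/- There exist four compact convex sets C₁, C₂, C₃, C₄ in ℝ² (not pairwise disjoint), ordered by index, such that with f the normalized (percent) area function on each set and α = 0.3, every three of the sets admit an (f,α)-transversal intersecting them in the order of their indices, but no line is an (f,α)-transversal of all four sets. Hence disjointness is necessary in the quantitative Hadwiger theorem. -/

import Mathlib

open MeasureTheory TopologicalSpace
open scoped Classical

noncomputable section

/-- The plane. -/
abbrev Pt : Type := ℝ × ℝ

/-- Planar cross product. -/
def pcross (v w : Pt) : ℝ := v.1 * w.2 - v.2 * w.1

/-- A directed line in the plane: a base point and a nonzero direction vector. -/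
structure DLine : Type where
  p : Pt
  v : Pt
  hv : v ≠ 0

/-- The closed half-plane to the left of a directed line. -/
def DLine.left (ℓ : DLine) : Set Pt := {q | 0 ≤ pcross ℓ.v (q - ℓ.p)}

/-- The closed half-plane to the right of a directed line. -/
def DLine.right (ℓ : DLine) : Set Pt := {q | pcross ℓ.v (q - ℓ.p) ≤ 0}

/-- The set of points of the line. -/
def DLine.line (ℓ : DLine) : Set Pt := {q | pcross ℓ.v (q - ℓ.p) = 0}

/-- Parametrization of the line along its direction. -/
def DLine.pt (ℓ : DLine) (t : ℝ) : Pt := ℓ.p + t • ℓ.v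

/-- `f` is a monotone function on convex sets. -/
def MonoConvex (f : Set Pt → ℝ) : Prop :=
  ∀ A B : Set Pt, Convex ℝ A → Convex ℝ B → A ⊆ B → f A ≤ f B

/-- `ℓ` is an `(f, α)`-stabber of `C`. -/
def Stabs (f : Set Pt → ℝ) (α : ℝ) (ℓ : DLine) (C : Set Pt) : Prop :=
  α ≤ f (ℓ.left ∩ C) ∧ α ≤ f (ℓ.right ∩ C)

/-- `ℓ` meets the sets `C 0, …, C (k-1)` in this order along its direction. -/
def MeetsInOrder (ℓ : DLine) {k : ℕ} (C : Fin k → Set Pt) : Prop :=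
  ∃ t : Fin k → ℝ, Monotone t ∧ ∀ m, ℓ.pt (t m) ∈ C m

/-- `ℓ` meets three sets in the order `A, B, C`. -/
def Meets3 (ℓ : DLine) (A B C : Set Pt) : Prop :=
  ∃ s t u : ℝ, s ≤ t ∧ t ≤ u ∧ ℓ.pt s ∈ A ∧ ℓ.pt t ∈ B ∧ ℓ.pt u ∈ C

/-- `f` is continuous with respect to the Hausdorff metric on nonempty compact sets. -/
def HausCont (f : Set Pt → ℝ) : Prop :=
  Continuous fun K : NonemptyCompacts Pt => f (K : Set Pt)

/-- The percent-area (normalized area) function of `K`. -/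
def pArea (K : Set Pt) (C : Set Pt) : ℝ :=
  (volume (C ∩ K)).toReal / (volume K).toReal

/-- `ℓ` is an `(f, α)`-stabber of `K` for the percent-area function of `K`. -/
def StabsPA (α : ℝ) (ℓ : DLine) (K : Set Pt) : Prop :=
  α ≤ pArea K (ℓ.left ∩ K) ∧ α ≤ pArea K (ℓ.right ∩ K)

/-- The reduced set `C'`: points of `C` through which the line in direction `v`
is an `(f, α)`-stabber of `C` (i.e. `C` minus the maximal pieces of `f`-value `< α`
on each side). -/
def reduceSet (f : Set Pt → ℝ) (α : ℝ) (v : Pt) (hv : v ≠ 0) (C : Set Pt) : Set Pt :=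
  {x ∈ C | Stabs f α ⟨x, v, hv⟩ C}

/-- The middle value of three reals. -/
def mid3 (a b c : ℝ) : ℝ := a + b + c - max a (max b c) - min a (min b c)

/-- The colorful `(f, α)`-separating sign of a set with respect to a directed line. -/
def signOf (f : Set Pt → ℝ) (α : ℝ) (ℓ : DLine) (C : Set Pt) : ℤ :=
  if Stabs f α ℓ C then 0 else if f (ℓ.right ∩ C) < α then -1 else 1

/-- The middle `(f, α)`-separating line of a colored family in direction `d`:
the line parallel to `d` crossing `d^⊥` at `(u₂ + v₂)/2`, where `u₂` (resp. `v₂`)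
is the middle value of the color-wise sups (resp. infs) of the endpoints of the
projections of the reduced sets onto `d^⊥`. -/
def middleLine (f : Set Pt → ℝ) (α : ℝ) (d : Pt) (hd : d ≠ 0)
    {n : ℕ} (C : Fin n → Set Pt) (color : Fin n → Fin 3) : DLine :=
  let a : Fin n → ℝ := fun i => sInf ((fun x => pcross d x) '' reduceSet f α d hd (C i))
  let b : Fin n → ℝ := fun i => sSup ((fun x => pcross d x) '' reduceSet f α d hd (C i))
  let p : Fin 3 → ℝ := fun c => sSup (a '' {i | color i = c})
  let q : Fin 3 → ℝ := fun c => sInf (b '' {i | color i = c})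
  let θ : ℝ := (mid3 (p 0) (p 1) (p 2) + mid3 (q 0) (q 1) (q 2)) / 2
  ⟨(θ / (d.1 ^ 2 + d.2 ^ 2)) • (-d.2, d.1), d, hd⟩

/-- A colored sign vector is balanced if for every two colors there is a coordinate
of one color equal to `1` and a coordinate of the other color equal to `-1`. -/
def BalancedVec {n : ℕ} (x : Fin n → ℤ) (color : Fin n → Fin 3) : Prop :=
  ∀ c₁ c₂ : Fin 3, c₁ ≠ c₂ → ∃ i j : Fin n, color i = c₁ ∧ color j = c₂ ∧
    ((x i = 1 ∧ x j = -1) ∨ (x i = -1 ∧ x j = 1))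

/-- A colored sign vector is Hadwiger if no three increasing, differently colored
coordinates form the pattern `(-1, 1, -1)` or `(1, -1, 1)`. -/
def HadwigerVec {n : ℕ} (x : Fin n → ℤ) (color : Fin n → Fin 3) : Prop :=
  ∀ i j k : Fin n, i < j → j < k →
    color i ≠ color j → color i ≠ color k → color j ≠ color k →
    ¬ ((x i = -1 ∧ x j = 1 ∧ x k = -1) ∨ (x i = 1 ∧ x j = -1 ∧ x k = 1))

/-- The axis-aligned rectangle `[0,a] × [0,b]`. -/
def rect (a b : ℝ) : Set Pt := Set.Icc (0:ℝ) a ×ˢ Set.Icc (0:ℝ) b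

/-- The two short (vertical) sides of the rectangle `[0,a] × [0,b]` (for `b < a`). -/
def shortSides (a b : ℝ) : Set Pt :=
  ({(0:ℝ)} ×ˢ Set.Icc (0:ℝ) b) ∪ ({a} ×ˢ Set.Icc (0:ℝ) b)

/-- A directed line does not intersect the short sides of the rectangle. -/
def avoidsShort (a b : ℝ) (ℓ : DLine) : Prop := ℓ.line ∩ shortSides a b = ∅

/-- Every directed line through `p` avoiding the short sides cuts the rectangle into
pieces of area fractions exactly `α` and `1 - α`. -/
def cutsExactly (a b α : ℝ) (p : Pt) : Prop :=
  ∀ ℓ : DLine, p ∈ ℓ.line → avoidsShort a b ℓ →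
    ((pArea (rect a b) (ℓ.left ∩ rect a b) = α ∧
        pArea (rect a b) (ℓ.right ∩ rect a b) = 1 - α) ∨
     (pArea (rect a b) (ℓ.left ∩ rect a b) = 1 - α ∧
        pArea (rect a b) (ℓ.right ∩ rect a b) = α))

/-!
Take two long horizontal bars, one above the other, and two thin vertical posts crossing both
bars. Any three of these rectangles are stabbed in order by a vertical line or by a slightly
tilted one; the area fractions are read off from the trapezoids into which a line cuts a
rectangle. On the other hand, an `α`-stabber of a rectangle must cross its middle part, since a
convex piece of the rectangle missing the middle lies in one of the two end slabs, whose area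
fraction is below `α`. So a common transversal would have to cross the middles of both bars,
which forces it to be steep, and the middles of both posts, which forces it to be flat.
-/

open Set

lemma pcross_sub_right (v q p : Pt) : pcross v (q - p) = pcross v q - pcross v p := by
  simp only [pcross, Prod.fst_sub, Prod.snd_sub]; ring

lemma isLinearMap_pcross (v : Pt) : IsLinearMap ℝ (pcross v) :=
  ⟨fun x y => by simp only [pcross, Prod.fst_add, Prod.snd_add]; ring,
   fun c x => by simp only [pcross, Prod.smul_fst, Prod.smul_snd, smul_eq_mul]; ring⟩

lemma pcross_eq_zero_of_pcross_eq_zero {v w w' : Pt} (hv : v ≠ 0) (h : pcross v w = 0)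
    (h' : pcross v w' = 0) : pcross w w' = 0 := by
  have h₁ : v.1 * pcross w w' = w.1 * pcross v w' - w'.1 * pcross v w := by
    unfold pcross; ring
  have h₂ : v.2 * pcross w w' = w.2 * pcross v w' - w'.2 * pcross v w := by
    unfold pcross; ring
  rw [h, h', mul_zero, mul_zero, sub_zero] at h₁ h₂
  by_contra hw
  exact hv (Prod.ext ((mul_eq_zero.1 h₁).resolve_right hw) ((mul_eq_zero.1 h₂).resolve_right hw))

namespace DLine

lemma continuous_pcross_sub (ℓ : DLine) : Continuous fun q => pcross ℓ.v (q - ℓ.p) := by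
  unfold pcross; fun_prop

lemma convex_left (ℓ : DLine) : Convex ℝ ℓ.left := by
  simpa only [DLine.left, pcross_sub_right, sub_nonneg] using
    convex_halfSpace_ge (isLinearMap_pcross ℓ.v) (pcross ℓ.v ℓ.p)

lemma convex_right (ℓ : DLine) : Convex ℝ ℓ.right := by
  simpa only [DLine.right, pcross_sub_right, sub_nonpos] using
    convex_halfSpace_le (isLinearMap_pcross ℓ.v) (pcross ℓ.v ℓ.p)

lemma pcross_sub_eq_zero_of_mem_line {ℓ : DLine} {x y : Pt} (hx : x ∈ ℓ.line)
    (hy : y ∈ ℓ.line) : pcross ℓ.v (x - y) = 0 := by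
  have hx' : pcross ℓ.v (x - ℓ.p) = 0 := hx
  have hy' : pcross ℓ.v (y - ℓ.p) = 0 := hy
  rw [← sub_sub_sub_cancel_right x y ℓ.p, pcross_sub_right, hx', hy', sub_zero]

lemma pcross_sub_eq_zero {ℓ : DLine} {x y z w : Pt} (hx : x ∈ ℓ.line) (hy : y ∈ ℓ.line)
    (hz : z ∈ ℓ.line) (hw : w ∈ ℓ.line) : pcross (x - y) (z - w) = 0 :=
  pcross_eq_zero_of_pcross_eq_zero ℓ.hv (pcross_sub_eq_zero_of_mem_line hx hy)
    (pcross_sub_eq_zero_of_mem_line hz hw)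

def swap (ℓ : DLine) : DLine :=
  ⟨ℓ.p.swap, ℓ.v.swap, by simpa [Prod.ext_iff, and_comm] using ℓ.hv⟩

lemma pcross_swap_sub (ℓ : DLine) (q : Pt) :
    pcross ℓ.swap.v (q - ℓ.swap.p) = -pcross ℓ.v (q.swap - ℓ.p) := by
  simp only [swap, pcross, Prod.fst_sub, Prod.snd_sub, Prod.fst_swap, Prod.snd_swap]; ring

lemma swap_left (ℓ : DLine) : ℓ.swap.left = Prod.swap ⁻¹' ℓ.right := by
  ext q; simp [DLine.left, DLine.right, pcross_swap_sub]

lemma swap_right (ℓ : DLine) : ℓ.swap.right = Prod.swap ⁻¹' ℓ.left := by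
  ext q; simp [DLine.left, DLine.right, pcross_swap_sub]

lemma mem_swap_line {ℓ : DLine} {q : Pt} : q ∈ ℓ.swap.line ↔ q.swap ∈ ℓ.line := by
  simp [DLine.line, pcross_swap_sub]

end DLine

lemma volume_preimage_swap (s : Set Pt) : volume (Prod.swap ⁻¹' s) = volume s := by
  rw [Measure.volume_eq_prod]
  exact Measure.measurePreserving_swap.measure_preimage_equiv (f := MeasurableEquiv.prodComm) s

lemma pArea_preimage_swap (K S : Set Pt) :
    pArea (Prod.swap ⁻¹' K) (Prod.swap ⁻¹' S) = pArea K S := by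
  simp only [pArea, ← preimage_inter, volume_preimage_swap]

lemma stabsPA_swap_iff {α : ℝ} {ℓ : DLine} {K : Set Pt} :
    StabsPA α ℓ.swap (Prod.swap ⁻¹' K) ↔ StabsPA α ℓ K := by
  simp only [StabsPA, DLine.swap_left, DLine.swap_right, ← preimage_inter, pArea_preimage_swap,
    and_comm]

lemma volume_Icc_prod_Icc {a b c d : ℝ} (hab : a ≤ b) :
    volume (Icc a b ×ˢ Icc c d) = ENNReal.ofReal ((b - a) * (d - c)) := by
  rw [Measure.volume_eq_prod, Measure.prod_prod, Real.volume_Icc, Real.volume_Icc,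
    ENNReal.ofReal_mul (sub_nonneg.2 hab)]

lemma volume_Icc_prod_Icc_pos {a b c d : ℝ} (hab : a < b) (hcd : c < d) :
    0 < volume (Icc a b ×ˢ Icc c d) := by
  rw [volume_Icc_prod_Icc hab.le]
  exact ENNReal.ofReal_pos.2 (mul_pos (sub_pos.2 hab) (sub_pos.2 hcd))

lemma le_pArea_of_subset {K H U : Set Pt} {α A B : ℝ} (hK : volume K = ENNReal.ofReal A)
    (hA : 0 < A) (hU : volume U = ENNReal.ofReal B) (hUH : U ⊆ H ∩ K) (hα : α * A ≤ B) :
    α ≤ pArea K (H ∩ K) := by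
  have hfin : volume (H ∩ K) ≠ ⊤ :=
    ne_top_of_le_ne_top (hK ▸ ENNReal.ofReal_ne_top) (measure_mono inter_subset_right)
  have hB : B ≤ (volume (H ∩ K)).toReal :=
    (ENNReal.ofReal_le_iff_le_toReal hfin).1 (hU ▸ measure_mono hUH)
  rw [pArea, inter_assoc, inter_self, hK, ENNReal.toReal_ofReal hA.le, le_div_iff₀ hA]
  linarith

lemma pArea_le_of_subset {K H U : Set Pt} {A B : ℝ} (hK : volume K = ENNReal.ofReal A)
    (hA : 0 ≤ A) (hU : volume U = ENNReal.ofReal B) (hB : 0 ≤ B) (hHU : H ∩ K ⊆ U) :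
    pArea K (H ∩ K) ≤ B / A := by
  rw [pArea, inter_assoc, inter_self, hK, ENNReal.toReal_ofReal hA]
  exact div_le_div_of_nonneg_right (ENNReal.toReal_le_of_le_ofReal hB (hU ▸ measure_mono hHU)) hA

lemma volume_regionBetween_Icc {f g : ℝ → ℝ} {a b : ℝ} (hf : Continuous f) (hg : Continuous g)
    (hab : a ≤ b) (hfg : ∀ x ∈ Icc a b, f x ≤ g x) :
    volume (regionBetween f g (Icc a b)) = ENNReal.ofReal (∫ x in a..b, (g x - f x)) := by
  rw [Measure.volume_eq_prod, volume_regionBetween_eq_integral hf.integrableOn_Icc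
    hg.integrableOn_Icc measurableSet_Icc hfg, integral_Icc_eq_integral_Ioc,
    ← intervalIntegral.integral_of_le hab]
  rfl

def affineThrough (a s b t : ℝ) (x : ℝ) : ℝ := s + (t - s) / (b - a) * (x - a)

lemma continuous_affineThrough (a s b t : ℝ) : Continuous (affineThrough a s b t) := by
  unfold affineThrough; fun_prop

lemma affineThrough_mem_Icc {a b c d s t x : ℝ} (hab : a < b) (hx : x ∈ Icc a b)
    (hs : s ∈ Icc c d) (ht : t ∈ Icc c d) : affineThrough a s b t x ∈ Icc c d := by
  have hl₀ : 0 ≤ (x - a) / (b - a) := div_nonneg (by linarith [hx.1]) (by linarith)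
  have hl₁ : (x - a) / (b - a) ≤ 1 := div_le_one_of_le₀ (by linarith [hx.2]) (by linarith)
  have : affineThrough a s b t x = (1 - (x - a) / (b - a)) * s + (x - a) / (b - a) * t := by
    unfold affineThrough; ring
  rw [this]
  constructor <;> nlinarith [hs.1, hs.2, ht.1, ht.2]

lemma integral_affineThrough (a s b t : ℝ) :
    ∫ x in a..b, affineThrough a s b t x = (b - a) * ((s + t) / 2) := by
  have hi : ∀ f : ℝ → ℝ, Continuous f → IntervalIntegrable f volume a b :=
    fun f hf => hf.intervalIntegrable a b
  unfold affineThrough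
  rw [intervalIntegral.integral_add (hi _ (by fun_prop)) (hi _ (by fun_prop)),
    intervalIntegral.integral_const_mul, intervalIntegral.integral_comp_sub_right (fun x => x)]
  simp only [intervalIntegral.integral_const, smul_eq_mul, sub_self, integral_id, ne_eq,
    OfNat.ofNat_ne_zero, not_false_eq_true, zero_pow, sub_zero]
  field_simp
  ring

lemma volume_regionBetween_const_affineThrough {a b c d s t : ℝ} (hab : a < b)
    (hs : s ∈ Icc c d) (ht : t ∈ Icc c d) :
    volume (regionBetween (fun _ => c) (affineThrough a s b t) (Icc a b)) =
      ENNReal.ofReal ((b - a) * ((s + t) / 2 - c)) := by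
  rw [volume_regionBetween_Icc continuous_const (continuous_affineThrough a s b t) hab.le
    fun x hx => (affineThrough_mem_Icc hab hx hs ht).1,
    intervalIntegral.integral_sub ((continuous_affineThrough a s b t).intervalIntegrable a b)
      intervalIntegrable_const,
    integral_affineThrough, intervalIntegral.integral_const, smul_eq_mul]
  ring_nf

lemma volume_regionBetween_affineThrough_const {a b c d s t : ℝ} (hab : a < b)
    (hs : s ∈ Icc c d) (ht : t ∈ Icc c d) :
    volume (regionBetween (affineThrough a s b t) (fun _ => d) (Icc a b)) =
      ENNReal.ofReal ((b - a) * (d - (s + t) / 2)) := by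
  rw [volume_regionBetween_Icc (continuous_affineThrough a s b t) continuous_const hab.le
    fun x hx => (affineThrough_mem_Icc hab hx hs ht).2,
    intervalIntegral.integral_sub intervalIntegrable_const
      ((continuous_affineThrough a s b t).intervalIntegrable a b),
    integral_affineThrough, intervalIntegral.integral_const, smul_eq_mul]
  ring_nf

namespace DLine

variable {ℓ : DLine} {a b s t : ℝ}

lemma v_snd_mul_eq (hℓs : (a, s) ∈ ℓ.line) (hℓt : (b, t) ∈ ℓ.line) :
    ℓ.v.2 * (b - a) = ℓ.v.1 * (t - s) := by
  simp only [DLine.line, pcross, mem_ofPred_eq, Prod.fst_sub, Prod.snd_sub] at hℓs hℓt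
  linear_combination hℓs - hℓt

lemma v_fst_ne_zero (hab : a ≠ b) (hℓs : (a, s) ∈ ℓ.line) (hℓt : (b, t) ∈ ℓ.line) :
    ℓ.v.1 ≠ 0 := by
  intro h0
  have hv := v_snd_mul_eq hℓs hℓt
  rw [h0, zero_mul, mul_eq_zero, or_iff_left (sub_ne_zero.2 hab.symm)] at hv
  exact ℓ.hv (Prod.ext h0 hv)

lemma pcross_sub_eq_mul_affineThrough (hab : a ≠ b) (hℓs : (a, s) ∈ ℓ.line)
    (hℓt : (b, t) ∈ ℓ.line) (q : Pt) :
    pcross ℓ.v (q - ℓ.p) = ℓ.v.1 * (q.2 - affineThrough a s b t q.1) := by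
  have hv := v_snd_mul_eq hℓs hℓt
  have hba : b - a ≠ 0 := sub_ne_zero.2 hab.symm
  simp only [DLine.line, pcross, mem_ofPred_eq, Prod.fst_sub, Prod.snd_sub, affineThrough]
    at hℓs ⊢
  field_simp
  linear_combination (b - a) * hℓs - (q.1 - a) * hv

end DLine

theorem stabsPA_of_mem_line_left_right {α a b c d s t : ℝ} {ℓ : DLine} (hab : a < b)
    (hcd : c < d) (hs : s ∈ Icc c d) (ht : t ∈ Icc c d) (hℓs : (a, s) ∈ ℓ.line)
    (hℓt : (b, t) ∈ ℓ.line) (h₁ : α * (d - c) ≤ (s + t) / 2 - c)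
    (h₂ : α * (d - c) ≤ d - (s + t) / 2) : StabsPA α ℓ (Icc a b ×ˢ Icc c d) := by
  set φ := affineThrough a s b t
  have hrep := DLine.pcross_sub_eq_mul_affineThrough hab.ne hℓs hℓt
  have hR := volume_Icc_prod_Icc (c := c) (d := d) hab.le
  have hA : 0 < (b - a) * (d - c) := mul_pos (sub_pos.2 hab) (sub_pos.2 hcd)
  have hbelow := volume_regionBetween_const_affineThrough hab hs ht
  have habove := volume_regionBetween_affineThrough_const hab hs ht
  have below_sub : ∀ S : Set Pt, (∀ q : Pt, q.2 < φ q.1 → q ∈ S) →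
      regionBetween (fun _ => c) φ (Icc a b) ⊆ S ∩ (Icc a b ×ˢ Icc c d) :=
    fun S hS q hq => ⟨hS q hq.2.2, hq.1, hq.2.1.le,
      hq.2.2.le.trans (affineThrough_mem_Icc hab hq.1 hs ht).2⟩
  have above_sub : ∀ S : Set Pt, (∀ q : Pt, φ q.1 < q.2 → q ∈ S) →
      regionBetween φ (fun _ => d) (Icc a b) ⊆ S ∩ (Icc a b ×ˢ Icc c d) :=
    fun S hS q hq => ⟨hS q hq.2.1, hq.1,
      (affineThrough_mem_Icc hab hq.1 hs ht).1.trans hq.2.1.le, hq.2.2.le⟩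
  rcases (DLine.v_fst_ne_zero hab.ne hℓs hℓt).lt_or_gt with hneg | hpos
  · refine ⟨le_pArea_of_subset hR hA hbelow (below_sub _ fun q hq => ?_) (by nlinarith),
      le_pArea_of_subset hR hA habove (above_sub _ fun q hq => ?_) (by nlinarith)⟩
    · simp only [DLine.left, mem_ofPred_eq, hrep]; nlinarith
    · simp only [DLine.right, mem_ofPred_eq, hrep]; nlinarith
  · refine ⟨le_pArea_of_subset hR hA habove (above_sub _ fun q hq => ?_) (by nlinarith),
      le_pArea_of_subset hR hA hbelow (below_sub _ fun q hq => ?_) (by nlinarith)⟩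
    · simp only [DLine.left, mem_ofPred_eq, hrep]; nlinarith
    · simp only [DLine.right, mem_ofPred_eq, hrep]; nlinarith

theorem stabsPA_of_mem_line_bottom_top {α a b c d s t : ℝ} {ℓ : DLine} (hab : a < b)
    (hcd : c < d) (hs : s ∈ Icc a b) (ht : t ∈ Icc a b) (hℓs : (s, c) ∈ ℓ.line)
    (hℓt : (t, d) ∈ ℓ.line) (h₁ : α * (b - a) ≤ (s + t) / 2 - a)
    (h₂ : α * (b - a) ≤ b - (s + t) / 2) : StabsPA α ℓ (Icc a b ×ˢ Icc c d) := by
  rw [← stabsPA_swap_iff, preimage_swap_prod]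
  exact stabsPA_of_mem_line_left_right hcd hab hs ht (DLine.mem_swap_line.2 hℓs)
    (DLine.mem_swap_line.2 hℓt) h₁ h₂

lemma Convex.subset_or_subset_of_disjoint_middle {S : Set Pt} {a b c d m : ℝ}
    (hS : Convex ℝ S) (hSR : S ⊆ Icc a b ×ˢ Icc c d) (hm : a + m ≤ b - m)
    (hdisj : Disjoint S (Icc (a + m) (b - m) ×ˢ Icc c d)) :
    S ⊆ Icc a (a + m) ×ˢ Icc c d ∨ S ⊆ Icc (b - m) b ×ˢ Icc c d := by
  have hcover : S ⊆ {p | p.1 < a + m} ∪ {p | b - m < p.1} := by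
    intro q hq
    by_contra hq'
    simp only [mem_union, mem_ofPred_eq, not_or, not_lt] at hq'
    exact disjoint_left.1 hdisj hq ⟨⟨hq'.1, hq'.2⟩, (hSR hq).2⟩
  have huv : Disjoint {p : Pt | p.1 < a + m} {p | b - m < p.1} :=
    disjoint_left.2 fun p hu hv => by simp only [mem_ofPred_eq] at hu hv; linarith
  rcases hS.isPreconnected.subset_or_subset (isOpen_lt continuous_fst continuous_const)
    (isOpen_lt continuous_const continuous_fst) huv hcover with h | h
  · exact .inl fun q hq => ⟨⟨(hSR hq).1.1, (h hq).le⟩, (hSR hq).2⟩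
  · exact .inr fun q hq => ⟨⟨(h hq).le, (hSR hq).1.2⟩, (hSR hq).2⟩

lemma Convex.exists_mem_middle_of_lt_pArea {H : Set Pt} {a b c d m : ℝ} (hH : Convex ℝ H)
    (hab : a < b) (hcd : c < d) (hm₀ : 0 ≤ m) (hm : a + m ≤ b - m)
    (h : m / (b - a) < pArea (Icc a b ×ˢ Icc c d) (H ∩ Icc a b ×ˢ Icc c d)) :
    ∃ z ∈ H, z ∈ Icc (a + m) (b - m) ×ˢ Icc c d := by
  by_contra! hdisj
  have hR := volume_Icc_prod_Icc (c := c) (d := d) hab.le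
  have hA : 0 ≤ (b - a) * (d - c) := by nlinarith
  have hba : b - a ≠ 0 := (sub_pos.2 hab).ne'
  have hdc : d - c ≠ 0 := (sub_pos.2 hcd).ne'
  have hslab : pArea (Icc a b ×ˢ Icc c d) (H ∩ Icc a b ×ˢ Icc c d) ≤ m / (b - a) := by
    rcases (hH.inter ((convex_Icc a b).prod (convex_Icc c d))).subset_or_subset_of_disjoint_middle
      inter_subset_right hm (disjoint_left.2 fun z hz => hdisj z hz.1) with hs | hs
    all_goals
      refine (pArea_le_of_subset hR hA (volume_Icc_prod_Icc (by linarith)) (by nlinarith)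
        hs).trans_eq ?_
      field_simp
      ring
  linarith

lemma StabsPA.exists_mem_line_middle_fst {α a b c d m : ℝ} {ℓ : DLine}
    (h : StabsPA α ℓ (Icc a b ×ˢ Icc c d)) (hab : a < b) (hcd : c < d) (hm₀ : 0 ≤ m)
    (hm : a + m ≤ b - m) (hmα : m < α * (b - a)) :
    ∃ z ∈ Icc (a + m) (b - m) ×ˢ Icc c d, z ∈ ℓ.line := by
  have hα : m / (b - a) < α := by rwa [div_lt_iff₀ (sub_pos.2 hab)]
  obtain ⟨p, hpℓ, hp⟩ :=
    ℓ.convex_left.exists_mem_middle_of_lt_pArea hab hcd hm₀ hm (hα.trans_le h.1)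
  obtain ⟨q, hqℓ, hq⟩ :=
    ℓ.convex_right.exists_mem_middle_of_lt_pArea hab hcd hm₀ hm (hα.trans_le h.2)
  obtain ⟨z, hz, hzℓ⟩ := ((convex_Icc _ _).prod (convex_Icc _ _)).isPreconnected.intermediate_value
    hq hp ℓ.continuous_pcross_sub.continuousOn ⟨hqℓ, hpℓ⟩
  exact ⟨z, hz, hzℓ⟩

lemma StabsPA.exists_mem_line_middle_snd {α a b c d m : ℝ} {ℓ : DLine}
    (h : StabsPA α ℓ (Icc a b ×ˢ Icc c d)) (hab : a < b) (hcd : c < d) (hm₀ : 0 ≤ m)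
    (hm : c + m ≤ d - m) (hmα : m < α * (d - c)) :
    ∃ z ∈ Icc a b ×ˢ Icc (c + m) (d - m), z ∈ ℓ.line := by
  rw [← stabsPA_swap_iff, preimage_swap_prod] at h
  obtain ⟨z, hz, hzℓ⟩ := h.exists_mem_line_middle_fst hcd hab hm₀ hm hmα
  exact ⟨z.swap, ⟨hz.2, hz.1⟩, DLine.mem_swap_line.1 hzℓ⟩

def topBar : Set Pt := Icc (-30) 70 ×ˢ Icc (19 / 5) 4
def leftPost : Set Pt := Icc (-1 / 10) (1 / 10) ×ˢ Icc (-10) 10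
def bottomBar : Set Pt := Icc (-30) 70 ×ˢ Icc (-4) (-19 / 5)
def rightPost : Set Pt := Icc (399 / 10) (401 / 10) ×ˢ Icc (-15 / 2) (15 / 2)

def leftLine : DLine := ⟨(0, 0), (0, -1), by simp⟩
def rightLine : DLine := ⟨(40, 0), (0, -1), by simp⟩
def fallingLine : DLine := ⟨(0, 4), (40, -1), by simp⟩
def risingLine : DLine := ⟨(0, -4), (40, 1), by simp⟩

lemma leftLine_transversal : StabsPA 0.3 leftLine topBar ∧ StabsPA 0.3 leftLine leftPost ∧
    StabsPA 0.3 leftLine bottomBar ∧ Meets3 leftLine topBar leftPost bottomBar := by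
  refine ⟨?_, ?_, ?_, -19 / 5, 0, 19 / 5, ?_⟩
  · apply stabsPA_of_mem_line_bottom_top (s := 0) (t := 0) <;>
      norm_num [leftLine, DLine.line, pcross]
  · apply stabsPA_of_mem_line_bottom_top (s := 0) (t := 0) <;>
      norm_num [leftLine, DLine.line, pcross]
  · apply stabsPA_of_mem_line_bottom_top (s := 0) (t := 0) <;>
      norm_num [leftLine, DLine.line, pcross]
  · norm_num [leftLine, DLine.pt, topBar, leftPost, bottomBar]

lemma rightLine_transversal : StabsPA 0.3 rightLine topBar ∧ StabsPA 0.3 rightLine bottomBar ∧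
    StabsPA 0.3 rightLine rightPost ∧ Meets3 rightLine topBar bottomBar rightPost := by
  refine ⟨?_, ?_, ?_, -19 / 5, 19 / 5, 7, ?_⟩
  · apply stabsPA_of_mem_line_bottom_top (s := 40) (t := 40) <;>
      norm_num [rightLine, DLine.line, pcross]
  · apply stabsPA_of_mem_line_bottom_top (s := 40) (t := 40) <;>
      norm_num [rightLine, DLine.line, pcross]
  · apply stabsPA_of_mem_line_bottom_top (s := 40) (t := 40) <;>
      norm_num [rightLine, DLine.line, pcross]
  · norm_num [rightLine, DLine.pt, topBar, bottomBar, rightPost]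

lemma fallingLine_transversal : StabsPA 0.3 fallingLine topBar ∧
    StabsPA 0.3 fallingLine leftPost ∧ StabsPA 0.3 fallingLine rightPost ∧
    Meets3 fallingLine topBar leftPost rightPost := by
  refine ⟨?_, ?_, ?_, 0, 0, 1, ?_⟩
  · apply stabsPA_of_mem_line_bottom_top (s := 8) (t := 0) <;>
      norm_num [fallingLine, DLine.line, pcross]
  · apply stabsPA_of_mem_line_left_right (s := 4 + 1 / 400) (t := 4 - 1 / 400) <;>
      norm_num [fallingLine, DLine.line, pcross]
  · apply stabsPA_of_mem_line_left_right (s := 4 - 399 / 400) (t := 4 - 401 / 400) <;>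
      norm_num [fallingLine, DLine.line, pcross]
  · norm_num [fallingLine, DLine.pt, topBar, leftPost, rightPost]

lemma risingLine_transversal : StabsPA 0.3 risingLine leftPost ∧
    StabsPA 0.3 risingLine bottomBar ∧ StabsPA 0.3 risingLine rightPost ∧
    Meets3 risingLine leftPost bottomBar rightPost := by
  refine ⟨?_, ?_, ?_, 0, 0, 1, ?_⟩
  · apply stabsPA_of_mem_line_left_right (s := -4 - 1 / 400) (t := -4 + 1 / 400) <;>
      norm_num [risingLine, DLine.line, pcross]
  · apply stabsPA_of_mem_line_bottom_top (s := 0) (t := 8) <;>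
      norm_num [risingLine, DLine.line, pcross]
  · apply stabsPA_of_mem_line_left_right (s := -4 + 399 / 400) (t := -4 + 401 / 400) <;>
      norm_num [risingLine, DLine.line, pcross]
  · norm_num [risingLine, DLine.pt, leftPost, bottomBar, rightPost]

lemma not_exists_common_transversal : ¬ ∃ ℓ : DLine, StabsPA 0.3 ℓ topBar ∧
    StabsPA 0.3 ℓ leftPost ∧ StabsPA 0.3 ℓ bottomBar ∧ StabsPA 0.3 ℓ rightPost := by
  rintro ⟨ℓ, h₁, h₂, h₃, h₄⟩
  obtain ⟨z₁, ⟨⟨hx₁, hx₁'⟩, hy₁, hy₁'⟩, hℓ₁⟩ := h₁.exists_mem_line_middle_fst (m := 59 / 2)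
    (by norm_num) (by norm_num) (by norm_num) (by norm_num) (by norm_num)
  obtain ⟨z₃, ⟨⟨hx₃, hx₃'⟩, hy₃, hy₃'⟩, hℓ₃⟩ := h₃.exists_mem_line_middle_fst (m := 59 / 2)
    (by norm_num) (by norm_num) (by norm_num) (by norm_num) (by norm_num)
  obtain ⟨z₂, ⟨⟨hx₂, hx₂'⟩, hy₂, hy₂'⟩, hℓ₂⟩ := h₂.exists_mem_line_middle_snd (m := 59 / 10)
    (by norm_num) (by norm_num) (by norm_num) (by norm_num) (by norm_num)
  obtain ⟨z₄, ⟨⟨hx₄, hx₄'⟩, hy₄, hy₄'⟩, hℓ₄⟩ := h₄.exists_mem_line_middle_snd (m := 22 / 5)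
    (by norm_num) (by norm_num) (by norm_num) (by norm_num) (by norm_num)
  -- `z₁ - z₃` is steep (`|Δx| ≤ 41`, `Δy ≥ 38/5`) and `z₄ - z₂` is flat (`Δx ≥ 199/5`,
  -- `|Δy| ≤ 36/5`), so they cannot be parallel: `41 * 36/5 < 38/5 * 199/5`
  have hpar := DLine.pcross_sub_eq_zero hℓ₁ hℓ₃ hℓ₄ hℓ₂
  simp only [pcross, Prod.fst_sub, Prod.snd_sub] at hpar
  nlinarith

/-- disjointness is necessary in the quantitative Hadwiger theorem:
four overlapping compact convex sets, percent-area functions and `α = 0.3`, such that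
every three admit an in-order `(f,α)`-transversal but no common one exists. -/
theorem stmt4 :
    ∃ C : Fin 4 → Set Pt,
      (∀ i, IsCompact (C i)) ∧ (∀ i, Convex ℝ (C i)) ∧ (∀ i, 0 < volume (C i)) ∧
      ¬ Pairwise (Function.onFun Disjoint C) ∧
      (∀ i j k : Fin 4, i < j → j < k →
        ∃ ℓ : DLine, StabsPA 0.3 ℓ (C i) ∧ StabsPA 0.3 ℓ (C j) ∧ StabsPA 0.3 ℓ (C k) ∧
          Meets3 ℓ (C i) (C j) (C k)) ∧
      ¬ ∃ ℓ : DLine, ∀ i, StabsPA 0.3 ℓ (C i) := by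
  refine ⟨![topBar, leftPost, bottomBar, rightPost], ?_, ?_, ?_, ?_, ?_, ?_⟩
  · intro i; fin_cases i <;> exact isCompact_Icc.prod isCompact_Icc
  · intro i; fin_cases i <;> exact (convex_Icc _ _).prod (convex_Icc _ _)
  · intro i; fin_cases i <;> exact volume_Icc_prod_Icc_pos (by norm_num) (by norm_num)
  · intro h
    exact disjoint_left.1 (h (show (0 : Fin 4) ≠ 1 by decide))
      (show ((0 : ℝ), (4 : ℝ)) ∈ topBar by norm_num [topBar]) (by norm_num [leftPost])
  · intro i j k hij hjk
    obtain ⟨rfl, rfl, rfl⟩ | ⟨rfl, rfl, rfl⟩ | ⟨rfl, rfl, rfl⟩ | ⟨rfl, rfl, rfl⟩ :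
        (i = 0 ∧ j = 1 ∧ k = 2) ∨ (i = 0 ∧ j = 1 ∧ k = 3) ∨ (i = 0 ∧ j = 2 ∧ k = 3) ∨
          (i = 1 ∧ j = 2 ∧ k = 3) := by
      revert i j k; decide
    · exact ⟨leftLine, leftLine_transversal⟩
    · exact ⟨fallingLine, fallingLine_transversal⟩
    · exact ⟨rightLine, rightLine_transversal⟩
    · exact ⟨risingLine, risingLine_transversal⟩
  · exact fun ⟨ℓ, h⟩ => not_exists_common_transversal ⟨ℓ, h 0, h 1, h 2, h 3⟩
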